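/- Let G and G' be two F-fixed realisations of a bipartite degree sequence S (with arbitrary fixed set F = F_E ∪ F_N). Then there exist F-fixed realisations G_1, …, G_k of S with G_1 = G and G_k = G' such that for every 1 ≤ i < k, G_{i+1} is obtained from G_i by a single j-swap for some even j with 4 ≤ j ≤ 2·min{n, n'}. -/

import Mathlib

/-!
The edge sets `G \ G'` and `G' \ G` are disjoint and have the same degree at every vertex.
Starting from an edge of `G \ G'` and leaving each vertex alternately along an edge of `G' \ G`
and of `G \ G'`, one eventually revisits a vertex; cutting the closed walk at repeated vertices
leaves an alternating cycle with pairwise distinct vertices, of length at most `2 min n n'`.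
Swapping it keeps all degrees, touches only edges of the symmetric difference (so fixed edges
and non-edges are untouched), and shrinks `G \ G'`; induction on `#(G \ G')` finishes.
-/

/-- `E ⊆ V × U` is a realisation of the bipartite degree sequence `(a, b)`:
vertex `i` of the first part has degree `a i`, vertex `j` of the second part degree `b j`. -/
def IsRealisation {n n' : ℕ} (a : Fin n → ℕ) (b : Fin n' → ℕ)
    (E : Finset (Fin n × Fin n')) : Prop :=
  (∀ i : Fin n, (E.filter fun p => p.1 = i).card = a i) ∧
  (∀ j : Fin n', (E.filter fun p => p.2 = j).card = b j)

/-- An `F`-fixed realisation: a realisation containing all fixed edges `FE`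
and none of the fixed non-edges `FN`. -/
def IsFFixedRealisation {n n' : ℕ} (a : Fin n → ℕ) (b : Fin n' → ℕ)
    (FE FN E : Finset (Fin n × Fin n')) : Prop :=
  IsRealisation a b E ∧ FE ⊆ E ∧ FN ∩ E = ∅

/-- `G'` is obtained from `G` by a `j`-swap (`j = 2 * m` even, `m ≥ 2`): the
symmetric difference is a vertex-disjoint alternating cycle of length `j`, i.e.
there are distinct `v 0, …, v (m-1)` and distinct `u 0, …, u (m-1)` with
`G \ G' = {(v s, u s) : s < m}` and `G' \ G = {(v (s+1 mod m), u s) : s < m}`. -/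
def IsJSwap {n n' : ℕ} (G G' : Finset (Fin n × Fin n')) (j : ℕ) : Prop :=
  ∃ m : ℕ, j = 2 * m ∧ 2 ≤ m ∧
    ∃ (v : ℕ → Fin n) (u : ℕ → Fin n'),
      (∀ s < m, ∀ t < m, v s = v t → s = t) ∧
      (∀ s < m, ∀ t < m, u s = u t → s = t) ∧
      G \ G' = (Finset.range m).image (fun s => (v s, u s)) ∧
      G' \ G = (Finset.range m).image (fun s => (v ((s + 1) % m), u s))

open Finset Relation

lemma Relation.ReflTransGen.exists_seq {α : Type*} {r : α → α → Prop} {P : α → Prop} {x y : α}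
    (h : ReflTransGen (fun a b => r a b ∧ P b) x y) (hx : P x) :
    ∃ (k : ℕ) (f : ℕ → α), 1 ≤ k ∧ f 1 = x ∧ f k = y ∧
      (∀ i, 1 ≤ i → i ≤ k → P (f i)) ∧ (∀ i, 1 ≤ i → i < k → r (f i) (f (i + 1))) := by
  induction h with
  | refl => exact ⟨1, fun _ => x, le_rfl, rfl, rfl, fun _ _ _ => hx, fun _ _ _ => by omega⟩
  | @tail z w _ hzy ih =>
    obtain ⟨k, f, hk, hf1, hfk, hP, hr⟩ := ih
    refine ⟨k + 1, fun i => if i ≤ k then f i else w, by omega, by simp [hk, hf1], by simp, ?_, ?_⟩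
    · intro i hi1 hik
      beta_reduce
      split_ifs with h
      exacts [hP i hi1 h, hzy.2]
    · intro i hi1 hik
      by_cases h : i + 1 ≤ k
      · simpa [h, show i ≤ k by omega] using hr i hi1 (by omega)
      · simpa [show i = k by omega, hfk] using hzy.1

lemma exists_lt_of_not_injOn_Iio {γ : Type*} {f : ℕ → γ} {m : ℕ}
    (h : ¬ Set.InjOn f (Set.Iio m)) : ∃ i j, i < j ∧ j < m ∧ f i = f j := by
  simp only [Set.InjOn, Set.mem_Iio, not_forall] at h
  obtain ⟨i, hi, j, hj, hij, hne⟩ := h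
  rcases Nat.lt_or_gt_of_ne hne with h | h
  exacts [⟨i, j, h, hj, hij⟩, ⟨j, i, h, hi, hij.symm⟩]

lemma card_filter_range_rotate (m : ℕ) (P : ℕ → Prop) [DecidablePred P] :
    #((range m).filter fun s => P ((s + 1) % m)) = #((range m).filter P) := by
  have rotate_inv : ∀ s < m,
      ((s + 1) % m + (m - 1)) % m = s ∧ ((s + (m - 1)) % m + 1) % m = s := fun s hs => by
    rw [Nat.mod_add_mod, Nat.mod_add_mod, show s + 1 + (m - 1) = s + m by omega,
      show s + (m - 1) + 1 = s + m by omega, Nat.add_mod_right, Nat.mod_eq_of_lt hs]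
    exact ⟨rfl, rfl⟩
  refine card_nbij' (fun s => (s + 1) % m) (fun s => (s + (m - 1)) % m) ?_ ?_ ?_ ?_ <;>
    intro s hs <;> simp only [coe_filter, mem_range, Set.mem_ofPred_eq] at hs ⊢
  · exact ⟨Nat.mod_lt _ (by omega), hs.2⟩
  · refine ⟨Nat.mod_lt _ (by omega), ?_⟩
    rw [(rotate_inv s hs.1).2]
    exact hs.2
  · exact (rotate_inv s hs.1).1
  · exact (rotate_inv s hs.1).2

section AlternatingWalk

variable {α β : Type*} {D D' : Finset (α × β)} {v : ℕ → α} {u : ℕ → β} {i j m : ℕ}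

def IsAltWalk (D D' : Finset (α × β)) (m : ℕ) (v : ℕ → α) (u : ℕ → β) : Prop :=
  ∀ s < m, (v s, u s) ∈ D ∧ (v (s + 1), u s) ∈ D'

/-- The closed walk `v 0, u 0, v 1, u 1, …, u (m - 1), v 0`, whose edges alternate between `D`
and `D'`. -/
def IsClosedAltWalk (D D' : Finset (α × β)) (m : ℕ) (v : ℕ → α) (u : ℕ → β) : Prop :=
  ∀ s < m, (v s, u s) ∈ D ∧ (v ((s + 1) % m), u s) ∈ D'

lemma IsClosedAltWalk.isAltWalk (hw : IsClosedAltWalk D D' m v u) (hj : j < m) :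
    IsAltWalk D D' j v u := by
  intro s hs
  have h := hw s (by omega)
  rwa [Nat.mod_eq_of_lt (by omega : s + 1 < m)] at h

lemma IsAltWalk.isClosedAltWalk_of_fst_eq (hw : IsAltWalk D D' j v u) (hij : i < j)
    (h : v i = v j) :
    IsClosedAltWalk D D' (j - i) (fun s => v (i + s)) (fun s => u (i + s)) := by
  intro s hs
  dsimp only
  refine ⟨(hw (i + s) (by omega)).1, ?_⟩
  have hblue := (hw (i + s) (by omega)).2
  rcases (show s + 1 ≤ j - i by omega).lt_or_eq with hlt | heq
  · rwa [Nat.mod_eq_of_lt hlt, ← add_assoc]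
  · rwa [heq, Nat.mod_self, add_zero, h, ← show i + s + 1 = j by omega]

lemma IsAltWalk.isClosedAltWalk_of_snd_eq (hw : IsAltWalk D D' j v u) (hj : (v j, u j) ∈ D)
    (hij : i < j) (h : u i = u j) :
    IsClosedAltWalk D D' (j - i) (fun s => v (i + 1 + s)) (fun s => u (i + 1 + s)) := by
  intro s hs
  dsimp only
  constructor
  · rcases (show i + 1 + s ≤ j by omega).lt_or_eq with hlt | heq
    · exact (hw _ hlt).1
    · rwa [heq]
  · rcases (show s + 1 ≤ j - i by omega).lt_or_eq with hlt | heq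
    · rw [Nat.mod_eq_of_lt hlt, ← add_assoc]
      exact (hw _ (by omega)).2
    · rw [heq, Nat.mod_self, add_zero, show i + 1 + s = j by omega, ← h]
      exact (hw i hij).2

/-- Cutting a closed alternating walk at a repeated vertex leaves a shorter closed alternating
walk, so a shortest one visits every vertex at most once. -/
lemma IsClosedAltWalk.exists_cycle (hD : Disjoint D D') (hw : IsClosedAltWalk D D' m v u)
    (hm : 0 < m) :
    ∃ m' v' u', 2 ≤ m' ∧ Set.InjOn v' (Set.Iio m') ∧ Set.InjOn u' (Set.Iio m') ∧
      IsClosedAltWalk D D' m' v' u' := by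
  induction m using Nat.strong_induction_on generalizing v u with
  | _ m ih =>
  by_cases hv : Set.InjOn v (Set.Iio m)
  · by_cases hu : Set.InjOn u (Set.Iio m)
    · refine ⟨m, v, u, ?_, hv, hu, hw⟩
      by_contra hlt
      obtain rfl : m = 1 := by omega
      have h := hw 0 one_pos
      exact disjoint_left.mp hD h.1 h.2
    · obtain ⟨i, j, hij, hj, h⟩ := exists_lt_of_not_injOn_Iio hu
      exact ih (j - i) (by omega)
        ((hw.isAltWalk hj).isClosedAltWalk_of_snd_eq (hw j hj).1 hij h) (by omega)
  · obtain ⟨i, j, hij, hj, h⟩ := exists_lt_of_not_injOn_Iio hv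
    exact ih (j - i) (by omega) ((hw.isAltWalk hj).isClosedAltWalk_of_fst_eq hij h) (by omega)

variable [DecidableEq α] [DecidableEq β]

def evenEdges (m : ℕ) (v : ℕ → α) (u : ℕ → β) : Finset (α × β) :=
  (range m).image fun s => (v s, u s)

def oddEdges (m : ℕ) (v : ℕ → α) (u : ℕ → β) : Finset (α × β) :=
  (range m).image fun s => (v ((s + 1) % m), u s)

lemma IsClosedAltWalk.evenEdges_subset (hw : IsClosedAltWalk D D' m v u) :
    evenEdges m v u ⊆ D := by
  simp only [evenEdges, image_subset_iff, mem_range]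
  exact fun s hs => (hw s hs).1

lemma IsClosedAltWalk.oddEdges_subset (hw : IsClosedAltWalk D D' m v u) :
    oddEdges m v u ⊆ D' := by
  simp only [oddEdges, image_subset_iff, mem_range]
  exact fun s hs => (hw s hs).2

lemma exists_infinite_altWalk
    (hrow : ∀ x, #(D.filter fun p => p.1 = x) = #(D'.filter fun p => p.1 = x))
    (hcol : ∀ y, #(D.filter fun p => p.2 = y) = #(D'.filter fun p => p.2 = y))
    (hD : D.Nonempty) :
    ∃ (v : ℕ → α) (u : ℕ → β), ∀ s, (v s, u s) ∈ D ∧ (v (s + 1), u s) ∈ D' := by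
  have hnext : ∀ p : D, ∃ p' : D, ((p' : α × β).1, (p : α × β).2) ∈ D' := by
    rintro ⟨p, hp⟩
    obtain ⟨q, hq⟩ : (D'.filter fun q => q.2 = p.2).Nonempty := by
      rw [← card_pos, ← hcol]
      exact card_pos.mpr ⟨p, mem_filter.mpr ⟨hp, rfl⟩⟩
    rw [mem_filter] at hq
    obtain ⟨p', hp'⟩ : (D.filter fun p' => p'.1 = q.1).Nonempty := by
      rw [← card_pos, hrow]
      exact card_pos.mpr ⟨q, mem_filter.mpr ⟨hq.1, rfl⟩⟩
    rw [mem_filter] at hp'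
    refine ⟨⟨p', hp'.1⟩, ?_⟩
    rw [hp'.2, ← hq.2]
    exact hq.1
  choose next hnext using hnext
  obtain ⟨p₀, hp₀⟩ := hD
  refine ⟨fun s => (next^[s] ⟨p₀, hp₀⟩ : α × β).1, fun s => (next^[s] ⟨p₀, hp₀⟩ : α × β).2,
    fun s => ⟨(next^[s] _).2, ?_⟩⟩
  dsimp only
  rw [Function.iterate_succ_apply']
  exact hnext _

lemma exists_cycle_of_card_filter_eq [Finite α] (hD : Disjoint D D')
    (hrow : ∀ x, #(D.filter fun p => p.1 = x) = #(D'.filter fun p => p.1 = x))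
    (hcol : ∀ y, #(D.filter fun p => p.2 = y) = #(D'.filter fun p => p.2 = y))
    (hne : D.Nonempty) :
    ∃ m v u, 2 ≤ m ∧ Set.InjOn v (Set.Iio m) ∧ Set.InjOn u (Set.Iio m) ∧
      IsClosedAltWalk D D' m v u := by
  obtain ⟨v, u, hw⟩ := exists_infinite_altWalk hrow hcol hne
  obtain ⟨k, l, hkl, h⟩ : ∃ k l, k < l ∧ v k = v l := by
    obtain ⟨x, y, hxy, h⟩ := Finite.exists_ne_map_eq_of_infinite v
    rcases Nat.lt_or_gt_of_ne hxy with h' | h'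
    exacts [⟨x, y, h', h⟩, ⟨y, x, h', h.symm⟩]
  exact IsClosedAltWalk.exists_cycle hD
    (IsAltWalk.isClosedAltWalk_of_fst_eq (fun s _ => hw s) hkl h) (by omega)

end AlternatingWalk

section Swap

variable {α : Type*} [DecidableEq α]

lemma Finset.filter_sdiff_distrib (P : α → Prop) [DecidablePred P] (s t : Finset α) :
    (s \ t).filter P = s.filter P \ t.filter P := by
  ext x
  simp only [mem_filter, mem_sdiff]
  tauto

lemma card_filter_sdiff_comm {s t : Finset α} (P : α → Prop) [DecidablePred P]
    (h : #(s.filter P) = #(t.filter P)) : #((s \ t).filter P) = #((t \ s).filter P) := by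
  rw [filter_sdiff_distrib, filter_sdiff_distrib]
  exact card_sdiff_comm h

variable {G R A : Finset α}

lemma sdiff_sdiff_union_eq (hR : R ⊆ G) (hA : Disjoint A G) : G \ (G \ R ∪ A) = R := by
  ext x
  have := @hR x
  have : x ∈ A → x ∉ G := fun h => disjoint_left.mp hA h
  simp only [mem_sdiff, mem_union]
  tauto

lemma sdiff_union_sdiff_eq (hA : Disjoint A G) : (G \ R ∪ A) \ G = A := by
  ext x
  have : x ∈ A → x ∉ G := fun h => disjoint_left.mp hA h
  simp only [mem_sdiff, mem_union]
  tauto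

lemma card_filter_sdiff_union (hR : R ⊆ G) (hA : Disjoint A G) (P : α → Prop) [DecidablePred P]
    (h : #(R.filter P) = #(A.filter P)) : #((G \ R ∪ A).filter P) = #(G.filter P) := by
  have hRG := filter_subset_filter P hR
  rw [filter_union, card_union_of_disjoint
      (disjoint_filter_filter (hA.symm.mono_left sdiff_subset)),
    filter_sdiff_distrib, card_sdiff_of_subset hRG, ← h]
  have := card_le_card hRG
  omega

lemma card_filter_image_range {m : ℕ} {g : ℕ → α} (hg : Set.InjOn g (Set.Iio m))
    (P : α → Prop) [DecidablePred P] :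
    #(((range m).image g).filter P) = #((range m).filter fun s => P (g s)) := by
  rw [filter_image, card_image_of_injOn]
  refine hg.mono fun s hs => ?_
  simp only [coe_filter, mem_range, Set.mem_ofPred_eq] at hs
  exact hs.1

end Swap

lemma le_card_of_injOn_Iio {γ : Type*} [Fintype γ] {f : ℕ → γ} {m : ℕ}
    (hf : Set.InjOn f (Set.Iio m)) : m ≤ Fintype.card γ := by
  simpa only [card_range, card_univ] using card_le_card_of_injOn f (s := range m) (t := univ)
    (fun _ _ => mem_coe.mpr (mem_univ _)) (by rwa [coe_range])

section Realisation

variable {n n' : ℕ} {a : Fin n → ℕ} {b : Fin n' → ℕ} {FE FN G G' : Finset (Fin n × Fin n')}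

lemma IsRealisation.card_eq (hG : IsRealisation a b G) : #G = ∑ i, a i := by
  rw [card_eq_sum_card_fiberwise (f := Prod.fst) (t := univ) fun _ _ => mem_univ _]
  exact sum_congr rfl fun i _ => hG.1 i

lemma IsRealisation.sdiff_nonempty (hG : IsRealisation a b G) (hG' : IsRealisation a b G')
    (hne : G ≠ G') : (G \ G').Nonempty := by
  rw [Finset.sdiff_nonempty]
  exact fun hsub => hne (eq_of_subset_of_card_le hsub (by rw [hG.card_eq, hG'.card_eq]))

/-- Swapping an alternating cycle keeps every degree: at each vertex of the cycle one incident
edge is removed and one is added. -/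
lemma IsRealisation.sdiff_evenEdges_union_oddEdges (hG : IsRealisation a b G) {m : ℕ}
    {v : ℕ → Fin n} {u : ℕ → Fin n'} (hv : Set.InjOn v (Set.Iio m))
    (hu : Set.InjOn u (Set.Iio m)) (hR : evenEdges m v u ⊆ G)
    (hA : Disjoint (oddEdges m v u) G) :
    IsRealisation a b (G \ evenEdges m v u ∪ oddEdges m v u) := by
  have hvu : Set.InjOn (fun s => (v s, u s)) (Set.Iio m) := hv.of_comp (g := Prod.fst)
  have hvu' : Set.InjOn (fun s => (v ((s + 1) % m), u s)) (Set.Iio m) :=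
    hu.of_comp (g := Prod.snd)
  constructor
  · intro x
    rw [card_filter_sdiff_union hR hA _ ?_, hG.1 x]
    rw [evenEdges, oddEdges, card_filter_image_range hvu, card_filter_image_range hvu',
      card_filter_range_rotate m fun s => v s = x]
  · intro y
    rw [card_filter_sdiff_union hR hA _ ?_, hG.2 y]
    rw [evenEdges, oddEdges, card_filter_image_range hvu, card_filter_image_range hvu']

lemma IsFFixedRealisation.of_inter_subset_of_subset_union
    (hG : IsFFixedRealisation a b FE FN G) (hG' : IsFFixedRealisation a b FE FN G')
    {H : Finset (Fin n × Fin n')} (hH : IsRealisation a b H) (hinter : G ∩ G' ⊆ H)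
    (hunion : H ⊆ G ∪ G') : IsFFixedRealisation a b FE FN H := by
  refine ⟨hH, fun x hx => hinter (mem_inter.mpr ⟨hG.2.1 hx, hG'.2.1 hx⟩), ?_⟩
  rw [← subset_empty]
  calc FN ∩ H ⊆ FN ∩ (G ∪ G') := inter_subset_inter_left hunion
    _ = ∅ := by rw [inter_union_distrib_left, hG.2.2, hG'.2.2, union_empty]

lemma IsFFixedRealisation.exists_swap (hG : IsFFixedRealisation a b FE FN G)
    (hG' : IsFFixedRealisation a b FE FN G') (hne : G ≠ G') :
    ∃ G₁, IsFFixedRealisation a b FE FN G₁ ∧ (∃ j ≤ 2 * min n n', IsJSwap G G₁ j) ∧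
      #(G₁ \ G') < #(G \ G') := by
  obtain ⟨m, v, u, hm, hv, hu, hw⟩ := exists_cycle_of_card_filter_eq disjoint_sdiff_sdiff
    (fun x => card_filter_sdiff_comm _ (by rw [hG.1.1 x, hG'.1.1 x]))
    (fun y => card_filter_sdiff_comm _ (by rw [hG.1.2 y, hG'.1.2 y]))
    (hG.1.sdiff_nonempty hG'.1 hne)
  have hR : evenEdges m v u ⊆ G \ G' := hw.evenEdges_subset
  have hA : oddEdges m v u ⊆ G' \ G := hw.oddEdges_subset
  have hRG : evenEdges m v u ⊆ G := hR.trans sdiff_subset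
  have hAG : Disjoint (oddEdges m v u) G := disjoint_of_subset_left hA sdiff_disjoint
  have hswap : (G \ evenEdges m v u ∪ oddEdges m v u) \ G' = (G \ G') \ evenEdges m v u := by
    ext x
    have := @hA x
    simp only [mem_sdiff, mem_union] at this ⊢
    tauto
  refine ⟨G \ evenEdges m v u ∪ oddEdges m v u, ?_, ⟨2 * m, ?_, m, rfl, hm, v, u, hv, hu,
    sdiff_sdiff_union_eq hRG hAG, sdiff_union_sdiff_eq hAG⟩, ?_⟩
  · refine hG.of_inter_subset_of_subset_union hG'
      (hG.1.sdiff_evenEdges_union_oddEdges hv hu hRG hAG) ?_ ?_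
    · intro x hx
      have := @hR x
      simp only [mem_inter, mem_sdiff, mem_union] at hx this ⊢
      tauto
    · intro x hx
      have := @hA x
      simp only [mem_sdiff, mem_union] at hx this ⊢
      tauto
  · have := le_card_of_injOn_Iio hv
    have := le_card_of_injOn_Iio hu
    simp only [Fintype.card_fin] at *
    omega
  · rw [hswap]
    exact card_lt_card (sdiff_ssubset hR
      ⟨(v 0, u 0), mem_image_of_mem _ (mem_range.mpr (by omega))⟩)

lemma IsFFixedRealisation.reflTransGen_swap (hG : IsFFixedRealisation a b FE FN G)
    (hG' : IsFFixedRealisation a b FE FN G') :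
    ReflTransGen (fun H H' => (∃ j ≤ 2 * min n n', IsJSwap H H' j) ∧
      IsFFixedRealisation a b FE FN H') G G' := by
  induction hc : #(G \ G') using Nat.strong_induction_on generalizing G with
  | _ c ih =>
  by_cases h : G = G'
  · rw [h]
  obtain ⟨G₁, hG₁, hswap, hlt⟩ := hG.exists_swap hG' h
  exact .head ⟨hswap, hG₁⟩ (ih _ (hc ▸ hlt) hG₁ rfl)

end Realisation

theorem stmt13_general {n n' : ℕ} (a : Fin n → ℕ) (b : Fin n' → ℕ)
    (FE FN : Finset (Fin n × Fin n'))
    (G G' : Finset (Fin n × Fin n'))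
    (hG : IsFFixedRealisation a b FE FN G)
    (hG' : IsFFixedRealisation a b FE FN G') :
    ∃ (k : ℕ) (Gs : ℕ → Finset (Fin n × Fin n')),
      1 ≤ k ∧ Gs 1 = G ∧ Gs k = G' ∧
      (∀ i, 1 ≤ i → i ≤ k → IsFFixedRealisation a b FE FN (Gs i)) ∧
      (∀ i, 1 ≤ i → i < k →
        ∃ j, j ≤ 2 * min n n' ∧ IsJSwap (Gs i) (Gs (i + 1)) j) :=
  (hG.reflTransGen_swap hG').exists_seq hG

/-- any two `F`-fixed realisations `G`, `G'` of `S` (for an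
arbitrary fixed set `F = FE ∪ FN`) are connected by a sequence `G_1, …, G_k` of
`F`-fixed realisations with `G_1 = G`, `G_k = G'` in which each `G_{i+1}` is
obtained from `G_i` by a single `j`-swap for some even `j` with
`4 ≤ j ≤ 2·min{n, n'}`. -/
theorem stmt13 {n n' : ℕ} (a : Fin n → ℕ) (b : Fin n' → ℕ)
    (FE FN : Finset (Fin n × Fin n')) (hdisj : Disjoint FE FN)
    (G G' : Finset (Fin n × Fin n'))
    (hG : IsFFixedRealisation a b FE FN G)
    (hG' : IsFFixedRealisation a b FE FN G') :
    ∃ (k : ℕ) (Gs : ℕ → Finset (Fin n × Fin n')),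
      1 ≤ k ∧ Gs 1 = G ∧ Gs k = G' ∧
      (∀ i, 1 ≤ i → i ≤ k → IsFFixedRealisation a b FE FN (Gs i)) ∧
      (∀ i, 1 ≤ i → i < k →
        ∃ j, j ≤ 2 * min n n' ∧ IsJSwap (Gs i) (Gs (i + 1)) j) :=
  stmt13_general a b FE FN G G' hG hG'
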